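/- arXiv:1404.2667 — 5 statements merged into one kernel-verified Lean document; each statement's English description precedes it below -/
import Mathlib

section
/- The cup product on secondary Hochschild cochains C^•((A,B,ε);A) is associative: for f ∈ C^m, g ∈ C^n, h ∈ C^p, one has (f ⌣ g) ⌣ h = f ⌣ (g ⌣ h). -/
open Finset MulOpposite

namespace SecondaryHochschild

variable {k : Type*} [CommRing k] {A : Type*} [Ring A] [Algebra k A]
  {B : Type*} [CommRing B] [Algebra k B]

/-- Secondary Hochschild cochains with coefficients in `A`.  A cochain of degree `n`
is modelled as a function of the diagonal entries `a 0, …, a (n-1)` and the upper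
entries `b i j` (for `i < j < n`) of the triangular tensor matrix. -/
abbrev Cochain (A B : Type*) : Type _ := (ℕ → A) → (ℕ → ℕ → B) → A

/-- Reindexing map merging positions `i` and `i+1`. -/
def mIdx (i j : ℕ) : ℕ := if j ≤ i then j else j + 1

/-- Diagonal of the `i`-th inner face `M^{1,n}_{i,i+1}` of the tensor matrix `(a, b)`. -/
def faceA (ε : B →ₐ[k] A) (i : ℕ) (a : ℕ → A) (b : ℕ → ℕ → B) : ℕ → A :=
  fun j => if j = i then ε (b i (i+1)) * a i * a (i+1) else a (mIdx i j)

/-- Upper entries of the `i`-th inner face `M^{1,n}_{i,i+1}`. -/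
def faceB (i : ℕ) (b : ℕ → ℕ → B) : ℕ → ℕ → B :=
  fun j l =>
    if j = i then b i (mIdx i l) * b (i+1) (mIdx i l)
    else if l = i then b (mIdx i j) i * b (mIdx i j) (i+1)
    else b (mIdx i j) (mIdx i l)

/-- The secondary Hochschild differential `δ^ε_n : C^n((A,B,ε);A) → C^{n+1}((A,B,ε);A)`. -/
def δ (ε : B →ₐ[k] A) (n : ℕ) (f : Cochain A B) : Cochain A B :=
  fun a b =>
    a 0 * ε (∏ j ∈ Finset.range n, b 0 (j+1)) *
        f (fun j => a (j+1)) (fun j l => b (j+1) (l+1))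
      + ∑ i ∈ Finset.range n, (-1 : ℤ)^(i+1) • f (faceA ε i a b) (faceB i b)
      + (-1 : ℤ)^(n+1) • (f a b * (a n * ε (∏ j ∈ Finset.range n, b j n)))

/-- The cup product of an `m`-cochain `f` and an `n`-cochain `g`:
`(f ⌣ g)(T^0_{m+n}) = f(T^0_m) g(T^m_{m+n}) ∏_{1≤i≤m, m+1≤j≤m+n} ε(b_{i,j})`. -/
def cup (ε : B →ₐ[k] A) (m n : ℕ) (f g : Cochain A B) : Cochain A B :=
  fun a b =>
    f a b * g (fun j => a (m + j)) (fun j l => b (m + j) (m + l)) *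
      ε (∏ i ∈ Finset.range m, ∏ j ∈ Finset.range n, b i (m + j))

/-- Reindexing map for the insertion of a block of length `n` at position `i`. -/
def insIdx (i n j : ℕ) : ℕ := if j ≤ i then j else j + n - 1

/-- The insertion operation `f ∘_i g`, inserting the value of the `n`-cochain `g` on the
`n × n` sub-block starting at position `i` into the `i`-th slot of `f`, merging the
rows and columns of `b`'s accordingly. -/
def circi (i n : ℕ) (f g : Cochain A B) : Cochain A B :=
  fun a b =>
    f (fun j => if j = i then g (fun l => a (i + l)) (fun l l' => b (i + l) (i + l'))
                else a (insIdx i n j))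
      (fun j l =>
        if j = i then ∏ t ∈ Finset.range n, b (i + t) (insIdx i n l)
        else if l = i then ∏ t ∈ Finset.range n, b (insIdx i n j) (i + t)
        else b (insIdx i n j) (insIdx i n l))

/-- The pre-Lie composition `f^m ∘ g^n = ∑_{i=0}^{m-1} (-1)^{(n-1)i} f ∘_i g`
(the sign is written `(-1)^{(n+1)i}`, which has the same parity). -/
def scomp (m n : ℕ) (f g : Cochain A B) : Cochain A B :=
  fun a b => ∑ i ∈ Finset.range m, (-1 : ℤ)^((n+1)*i) • circi i n f g a b

/-- The Gerstenhaber bracket `[f^m, g^n] = f ∘ g - (-1)^{(m-1)(n-1)} g ∘ f`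
(the sign is written `(-1)^{(m+1)(n+1)}`, which has the same parity). -/
def bracket (m n : ℕ) (f g : Cochain A B) : Cochain A B :=
  scomp m n f g - ((-1 : ℤ)^((m+1)*(n+1))) • scomp n m g f

/-- The cup product on secondary Hochschild cochains is associative:
`(f ⌣ g) ⌣ h = f ⌣ (g ⌣ h)` for `f ∈ C^m`, `g ∈ C^n`, `h ∈ C^p`. -/
theorem cup_assoc
    {k : Type*} [Field k] {A : Type*} [Ring A] [Algebra k A]
    {B : Type*} [CommRing B] [Algebra k B]
    (ε : B →ₐ[k] A) (hcent : ∀ β : B, ε β ∈ Set.center A)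
    (m n p : ℕ) (f g h : Cochain A B) :
    cup ε (m + n) p (cup ε m n f g) h = cup ε m (n + p) f (cup ε n p g h) := by
  funext a b
  have hcomm : ∀ (β : B) (x : A), ε β * x = x * ε β := fun β x =>
    (Set.mem_center_iff.mp (hcent β)).comm x
  simp only [cup, ← add_assoc]
  set F := f a b
  set G := g (fun j => a (m + j)) (fun j l => b (m + j) (m + l)) with hG
  set H := h (fun j => a (m + n + j)) (fun j l => b (m + n + j) (m + n + l)) with hH
  have key : ∀ (x y z : A) (u v : B), x * y * ε u * z * ε v = x * y * z * ε (u * v) := by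
    intro x y z u v
    rw [map_mul, mul_assoc (x * y) (ε u) z, hcomm u z, ← mul_assoc, mul_assoc]
  have key2 : ∀ (x y z : A) (w v : B), x * (y * z * ε w) * ε v = x * y * z * ε (w * v) := by
    intro x y z w v
    rw [map_mul, ← mul_assoc, ← mul_assoc, ← mul_assoc]
  rw [key, key2]
  congr 1
  refine congrArg ε ?_
  rw [Finset.prod_range_add (fun i => ∏ j ∈ Finset.range p, b i (m + n + j)) m n]
  have split : (∏ i ∈ Finset.range m, ∏ j ∈ Finset.range (n + p), b i (m + j))
      = (∏ i ∈ Finset.range m, ∏ j ∈ Finset.range n, b i (m + j)) *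
        ∏ i ∈ Finset.range m, ∏ j ∈ Finset.range p, b i (m + n + j) := by
    rw [← Finset.prod_mul_distrib]
    refine Finset.prod_congr rfl fun i _ => ?_
    rw [Finset.prod_range_add (fun j => b i (m + j)) n p]
    simp [← add_assoc]
  rw [split]
  ring

end SecondaryHochschild
end

section
/- Let {V_n, ∘_i} be a pre-Lie system: V_n are k-vector spaces with k-linear maps ∘_i : V_m ⊗ V_n → V_{m+n} for 0 ≤ i ≤ m satisfying (f^m ∘_i g^n) ∘_j h^p = (f^m ∘_j h^p) ∘_{i+p} g^n for 0 ≤ j ≤ i-1 and (f^m ∘_i g^n) ∘_j h^p = f^m ∘_i (g^n ∘_{j-i} h^p) for i ≤ j ≤ i+n. Define f^m ∘ g^n = Σ_{i=0}^{m} (-1)^{ni} f^m ∘_i g^n and [f^m, g^n] = f^m ∘ g^n − (-1)^{mn} g^n ∘ f^m. Then (⊕_n V_n, [·,·]) is a graded Lie algebra (graded antisymmetry and graded Jacobi identity hold). -/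
/-!
All computations take place in `⨁ n, V n`, where the degree casts `cst` disappear.
Expand `(f ∘ g) ∘ h` into the terms `±(f ∘_i g) ∘_j h`. By the nesting identity, the terms
with `i ≤ j ≤ i + n` add up to `f ∘ (g ∘ h)`; the remaining ones, where `h` is inserted into `f`
disjointly from `g`, match those of `(f ∘ h) ∘ g` by the disjointness identity. Hence the
associator `(f ∘ g) ∘ h - f ∘ (g ∘ h)` is graded symmetric in `g` and `h`, i.e. `∘` is a graded
pre-Lie product, and the graded Jacobi identity of its graded commutator is a sign computation.
-/

namespace PreLieSystem

/-- Transport along an equality of degrees. -/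
def cst (V : ℕ → Type*) {m n : ℕ} (h : m = n) (x : V m) : V n := h ▸ x

/-- The circle product `f^m ∘ g^n = ∑_{i=0}^{m} (-1)^{ni} f^m ∘_i g^n` of a pre-Lie
system. -/
def circ (V : ℕ → Type*) [∀ n, AddCommGroup (V n)]
    (comp : ∀ m n : ℕ, ℕ → V m → V n → V (m + n))
    (m n : ℕ) (f : V m) (g : V n) : V (m + n) :=
  ∑ i ∈ Finset.range (m + 1), (-1 : ℤ)^(n * i) • comp m n i f g

/-- The graded bracket `[f^m, g^n] = f^m ∘ g^n - (-1)^{mn} g^n ∘ f^m`. -/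
def gbracket (V : ℕ → Type*) [∀ n, AddCommGroup (V n)]
    (comp : ∀ m n : ℕ, ℕ → V m → V n → V (m + n))
    (m n : ℕ) (f : V m) (g : V n) : V (m + n) :=
  circ V comp m n f g - (-1 : ℤ)^(m * n) • cst V (by omega) (circ V comp n m g f)

open DirectSum Finset

section

variable {V : ℕ → Type*} [∀ n, AddCommGroup (V n)]
  {comp : ∀ m n : ℕ, ℕ → V m → V n → V (m + n)} {m n p : ℕ}

lemma of_cst {a b : ℕ} (h : a = b) (x : V a) : of V b (cst V h x) = of V a x := by
  subst h; rfl

lemma of_circ_cst_left {a a' b : ℕ} (h : a' = a) (x : V a') (y : V b) :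
    of V (a + b) (circ V comp a b (cst V h x) y) = of V (a' + b) (circ V comp a' b x y) := by
  subst h; rfl

lemma of_circ_cst_right {a b b' : ℕ} (h : b' = b) (x : V a) (y : V b') :
    of V (a + b) (circ V comp a b x (cst V h y)) = of V (a + b') (circ V comp a b' x y) := by
  subst h; rfl

lemma of_gbracket (f : V m) (g : V n) :
    of V _ (gbracket V comp m n f g)
      = of V _ (circ V comp m n f g) - (-1 : ℤ)^(m * n) • of V _ (circ V comp n m g f) := by
  rw [gbracket, map_sub, map_zsmul, of_cst]

theorem gbracket_antisymm (f : V m) (g : V n) :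
    gbracket V comp m n f g
      = -((-1 : ℤ)^(m * n) • cst V (Nat.add_comm n m) (gbracket V comp n m g f)) := by
  apply of_injective (β := V)
  rw [map_neg, map_zsmul, of_cst, of_gbracket, of_gbracket, Nat.mul_comm n m]
  rcases Nat.even_or_odd (m * n) with hmn | hmn <;> simp only [hmn.neg_one_pow] <;> module

/- The nesting identity is indexed by `j = i + l` to avoid truncated subtraction. -/
variable (comp) in
structure IsPreLie : Prop where
  add_left : ∀ (m n i : ℕ) (f f' : V m) (g : V n),
    comp m n i (f + f') g = comp m n i f g + comp m n i f' g
  add_right : ∀ (m n i : ℕ) (f : V m) (g g' : V n),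
    comp m n i f (g + g') = comp m n i f g + comp m n i f g'
  comp_comp_of_lt : ∀ (m n p i j : ℕ) (f : V m) (g : V n) (h : V p), j < i → i ≤ m →
    comp (m + n) p j (comp m n i f g) h
      = cst V (Nat.add_right_comm m p n) (comp (m + p) n (i + p) (comp m p j f h) g)
  comp_comp_add : ∀ (m n p i l : ℕ) (f : V m) (g : V n) (h : V p), l ≤ n → i ≤ m →
    comp (m + n) p (i + l) (comp m n i f g) h
      = cst V (Nat.add_assoc m n p).symm (comp m (n + p) i f (comp n p l g h))

section Sums

variable (comp)

def compComp (i j : ℕ) (f : V m) (g : V n) (h : V p) : ⨁ k, V k :=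
  (-1 : ℤ)^(n * i + p * j) • of V _ (comp (m + n) p j (comp m n i f g) h)

def leftNested (f : V m) (g : V n) (h : V p) : ⨁ k, V k :=
  of V _ (circ V comp (m + n) p (circ V comp m n f g) h)

def rightNested (f : V m) (g : V n) (h : V p) : ⨁ k, V k :=
  of V _ (circ V comp m (n + p) f (circ V comp n p g h))

def associator (f : V m) (g : V n) (h : V p) : ⨁ k, V k :=
  leftNested comp f g h - rightNested comp f g h

/- The terms `(f ∘_i g) ∘_j h` in which `h` is inserted into `f` before, resp. after, `g`. -/
def lowerSum (f : V m) (g : V n) (h : V p) : ⨁ k, V k :=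
  ∑ i ∈ range (m + 1), ∑ j ∈ range i, compComp comp i j f g h

def upperSum (f : V m) (g : V n) (h : V p) : ⨁ k, V k :=
  ∑ i ∈ range (m + 1), ∑ j ∈ Ico (i + n + 1) (m + n + 1), compComp comp i j f g h

end Sums

namespace IsPreLie

variable (hc : IsPreLie comp)
include hc

def compLeft (i : ℕ) (g : V n) : V m →+ V (m + n) :=
  AddMonoidHom.mk' (comp m n i · g) (hc.add_left m n i · · g)

def compRight (i : ℕ) (f : V m) : V n →+ V (m + n) :=
  AddMonoidHom.mk' (comp m n i f ·) (hc.add_right m n i f)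

lemma circ_sub_left (f f' : V m) (g : V n) :
    circ V comp m n (f - f') g = circ V comp m n f g - circ V comp m n f' g := by
  simp only [circ, ← sum_sub_distrib, ← smul_sub]
  exact sum_congr rfl fun i _ => congrArg _ ((hc.compLeft i g).map_sub f f')

lemma circ_zsmul_left (c : ℤ) (f : V m) (g : V n) :
    circ V comp m n (c • f) g = c • circ V comp m n f g := by
  simp only [circ, smul_sum, smul_comm c]
  exact sum_congr rfl fun i _ => congrArg _ ((hc.compLeft i g).map_zsmul c f)

lemma circ_sub_right (f : V m) (g g' : V n) :
    circ V comp m n f (g - g') = circ V comp m n f g - circ V comp m n f g' := by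
  simp only [circ, ← sum_sub_distrib, ← smul_sub]
  exact sum_congr rfl fun i _ => congrArg _ ((hc.compRight i f).map_sub g g')

lemma circ_zsmul_right (c : ℤ) (f : V m) (g : V n) :
    circ V comp m n f (c • g) = c • circ V comp m n f g := by
  simp only [circ, smul_sum, smul_comm c]
  exact sum_congr rfl fun i _ => congrArg _ ((hc.compRight i f).map_zsmul c g)

lemma of_circ_circ_left (f : V m) (g : V n) (h : V p) :
    of V _ (circ V comp (m + n) p (circ V comp m n f g) h)
      = ∑ i ∈ range (m + 1), ∑ j ∈ range (m + n + 1), compComp comp i j f g h := by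
  rw [circ, map_sum, sum_comm]
  refine sum_congr rfl fun j _ => ?_
  change of V _ (_ • hc.compLeft j h (circ V comp m n f g)) = _
  rw [circ, map_sum, smul_sum, map_sum]
  refine sum_congr rfl fun i _ => ?_
  simp only [map_zsmul, smul_smul, ← pow_add]
  rw [compComp, add_comm (p * j)]
  rfl

lemma of_circ_circ_right (f : V m) (g : V n) (h : V p) :
    of V _ (circ V comp m (n + p) f (circ V comp n p g h))
      = ∑ i ∈ range (m + 1), ∑ l ∈ range (n + 1), compComp comp i (i + l) f g h := by
  rw [circ, map_sum]
  refine sum_congr rfl fun i hi => ?_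
  change of V _ (_ • hc.compRight i f (circ V comp n p g h)) = _
  rw [circ, map_sum, smul_sum, map_sum]
  refine sum_congr rfl fun l hl => ?_
  simp only [map_zsmul, smul_smul, ← pow_add]
  rw [compComp,
    hc.comp_comp_add m n p i l f g h (by simp at hl; omega) (by simp at hi; omega), of_cst]
  congr 2
  ring

lemma associator_eq_lowerSum_add_upperSum (f : V m) (g : V n) (h : V p) :
    associator comp f g h = lowerSum comp f g h + upperSum comp f g h := by
  rw [associator, leftNested, rightNested, hc.of_circ_circ_left, hc.of_circ_circ_right,
    lowerSum, upperSum, ← sum_sub_distrib, ← sum_add_distrib]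
  refine sum_congr rfl fun i hi => ?_
  have him : i ≤ m := Nat.lt_succ_iff.mp (mem_range.mp hi)
  rw [← sum_range_add_sum_Ico _ (by omega : i + n + 1 ≤ m + n + 1),
    ← sum_range_add_sum_Ico _ (by omega : i ≤ i + n + 1), sum_Ico_eq_sum_range,
    show i + n + 1 - i = n + 1 by omega]
  abel

lemma lowerSum_eq_upperSum (f : V m) (g : V n) (h : V p) :
    lowerSum comp f g h = (-1 : ℤ)^(n * p) • upperSum comp f h g := by
  have hterm : ∀ i j, j < i → i ≤ m →
      compComp comp i j f g h = (-1 : ℤ)^(n * p) • compComp comp j (i + p) f h g := by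
    intro i j hji him
    rw [compComp, compComp, ← of_cst (Nat.add_right_comm m p n),
      ← hc.comp_comp_of_lt m n p i j f g h hji him, smul_smul, ← pow_add,
      show n * p + (p * j + n * (i + p)) = n * i + p * j + 2 * (n * p) by ring,
      pow_add _ (n * i + p * j), (even_two_mul _).neg_one_pow, mul_one]
  calc lowerSum comp f g h
      = ∑ i ∈ range (m + 1), ∑ j ∈ range i, (-1 : ℤ)^(n * p) • compComp comp j (i + p) f h g :=
        sum_congr rfl fun i hi => sum_congr rfl fun j hj =>
          hterm i j (mem_range.mp hj) (Nat.lt_succ_iff.mp (mem_range.mp hi))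
    _ = ∑ j ∈ range (m + 1), ∑ i ∈ Ico (j + 1) (m + 1),
          (-1 : ℤ)^(n * p) • compComp comp j (i + p) f h g :=
        sum_comm' fun i j => by simp only [mem_range, mem_Ico]; omega
    _ = (-1 : ℤ)^(n * p) • upperSum comp f h g := by
        simp only [upperSum, smul_sum]
        refine sum_congr rfl fun j _ => ?_
        rw [sum_Ico_add' (fun i => (-1 : ℤ)^(n * p) • compComp comp j i f h g),
          Nat.add_right_comm j 1 p, Nat.add_right_comm m 1 p]

lemma associator_symm (f : V m) (g : V n) (h : V p) :
    associator comp f g h = (-1 : ℤ)^(n * p) • associator comp f h g := by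
  rw [hc.associator_eq_lowerSum_add_upperSum, hc.associator_eq_lowerSum_add_upperSum,
    hc.lowerSum_eq_upperSum f g h, hc.lowerSum_eq_upperSum f h g, smul_add, smul_smul,
    ← pow_add, mul_comm p n, ← two_mul, (even_two_mul _).neg_one_pow, one_smul, add_comm]

lemma leftNested_eq_rightNested_add (f : V m) (g : V n) (h : V p) :
    leftNested comp f g h = rightNested comp f g h
      + (-1 : ℤ)^(n * p) • (leftNested comp f h g - rightNested comp f h g) := by
  rw [← associator, ← hc.associator_symm, associator, add_sub_cancel]

lemma of_gbracket_gbracket (f : V m) (g : V n) (h : V p) :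
    of V _ (gbracket V comp (m + n) p (gbracket V comp m n f g) h)
      = leftNested comp f g h - (-1 : ℤ)^(m * n) • leftNested comp g f h
        - (-1 : ℤ)^((m + n) * p)
          • (rightNested comp h f g - (-1 : ℤ)^(m * n) • rightNested comp h g f) := by
  rw [of_gbracket, gbracket, hc.circ_sub_left, hc.circ_zsmul_left, hc.circ_sub_right,
    hc.circ_zsmul_right]
  simp only [map_sub, map_zsmul, of_circ_cst_left, of_circ_cst_right, leftNested, rightNested]

theorem gbracket_jacobi (f : V m) (g : V n) (h : V p) :
    (-1 : ℤ)^(m * p) • gbracket V comp (m + n) p (gbracket V comp m n f g) h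
      + (-1 : ℤ)^(n * m) • cst V ((Nat.add_comm (n + p) m).trans (Nat.add_assoc m n p).symm)
          (gbracket V comp (n + p) m (gbracket V comp n p g h) f)
      + (-1 : ℤ)^(p * n) • cst V ((Nat.add_assoc p m n).trans (Nat.add_comm p (m + n)))
          (gbracket V comp (p + m) n (gbracket V comp p m h f) g)
      = 0 := by
  apply of_injective (β := V)
  simp only [map_add, map_zsmul, of_cst, map_zero, hc.of_gbracket_gbracket]
  rw [hc.leftNested_eq_rightNested_add f g h, hc.leftNested_eq_rightNested_add g h f,
    hc.leftNested_eq_rightNested_add h f g, add_mul, add_mul, add_mul, mul_comm n m, mul_comm p n,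
    mul_comm p m, pow_add, pow_add, pow_add]
  rcases Nat.even_or_odd (m * n) with hmn | hmn <;>
    rcases Nat.even_or_odd (n * p) with hnp | hnp <;>
      rcases Nat.even_or_odd (m * p) with hmp | hmp <;>
        simp only [hmn.neg_one_pow, hnp.neg_one_pow, hmp.neg_one_pow] <;> module

end IsPreLie

end

theorem preLie_graded_lie
    (V : ℕ → Type*)
    [∀ n, AddCommGroup (V n)]
    (comp : ∀ m n : ℕ, ℕ → V m → V n → V (m + n))
    (hadd_left : ∀ (m n i : ℕ) (f f' : V m) (g : V n),
      comp m n i (f + f') g = comp m n i f g + comp m n i f' g)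
    (hadd_right : ∀ (m n i : ℕ) (f : V m) (g g' : V n),
      comp m n i f (g + g') = comp m n i f g + comp m n i f g')
    (hdisj : ∀ (m n p i j : ℕ) (f : V m) (g : V n) (h : V p),
      j + 1 ≤ i → i ≤ m →
      cst V (show m + n + p = m + n + p by omega) (comp (m + n) p j (comp m n i f g) h)
        = cst V (show m + p + n = m + n + p by omega) (comp (m + p) n (i + p) (comp m p j f h) g))
    (hnest : ∀ (m n p i j : ℕ) (f : V m) (g : V n) (h : V p),
      i ≤ j → j ≤ i + n → i ≤ m →
      comp (m + n) p j (comp m n i f g) h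
        = cst V (show m + (n + p) = m + n + p by omega) (comp m (n + p) i f (comp n p (j - i) g h))) :
    (∀ (m n : ℕ) (f : V m) (g : V n),
        gbracket V comp m n f g
          = -((-1 : ℤ)^(m * n) • cst V (by omega) (gbracket V comp n m g f)))
    ∧ (∀ (m n p : ℕ) (f : V m) (g : V n) (h : V p),
        (-1 : ℤ)^(m * p) • gbracket V comp (m + n) p (gbracket V comp m n f g) h
          + (-1 : ℤ)^(n * m) •
              cst V (by omega) (gbracket V comp (n + p) m (gbracket V comp n p g h) f)
          + (-1 : ℤ)^(p * n) •
              cst V (by omega) (gbracket V comp (p + m) n (gbracket V comp p m h f) g)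
          = 0) := by
  have hc : IsPreLie comp :=
    { add_left := hadd_left
      add_right := hadd_right
      comp_comp_of_lt := hdisj
      comp_comp_add := fun m n p i l f g h hl hi => by
        simpa using hnest m n p i (i + l) f g h (by omega) (by omega) hi }
  exact ⟨fun _ _ => gbracket_antisymm, fun _ _ _ => hc.gbracket_jacobi⟩

end PreLieSystem
end

section
/- Let X be a B-algebra via ε_X : B → X, π : X → A a surjective morphism of B-algebras with M = ker(π) satisfying M² = 0, and s : A → X a k-linear section of π. Then c_s : A ⊗ A ⊗ B → M defined by c_s(a ⊗ b ⊗ α) = ε_X(α)s(a)s(b) − s(ε(α)ab) is a 2-cocycle in C^2((A,B,ε);M), and for two sections s, t one has c_s − c_t = δ^ε_1(s − t); hence the cohomology class of c_s in H^2((A,B,ε);M) is independent of the choice of section. -/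
namespace SecondaryHochschild

/-- Let `X` be a `B`-algebra via `ε_X : B → X`, let `π : X → A` be a
surjective morphism of `B`-algebras with `M = ker π` satisfying `M² = 0`, and let
`s, t : A → X` be `k`-linear sections of `π`.  Then
`c_s(a ⊗ b ⊗ α) = ε_X(α) s(a) s(b) − s(ε(α) a b)` takes values in `M = ker π`, it is a
2-cocycle in `C²((A,B,ε); M)` (the `A`-bimodule structure on `ker π` being given by
`a·m = s(a)m`, `m·a = m s(a)`), and `c_s − c_t = δ^ε_1(s − t)`; hence the class of
`c_s` in `H²((A,B,ε); M)` does not depend on the choice of the section. -/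
theorem section_cocycle_well_defined
    {k : Type*} [Field k] {A : Type*} [Ring A] [Algebra k A]
    {B : Type*} [CommRing B] [Algebra k B]
    {X : Type*} [Ring X] [Algebra k X]
    (ε : B →ₐ[k] A) (hcent : ∀ β : B, ε β ∈ Set.center A)
    (εX : B →ₐ[k] X) (hXcent : ∀ β : B, εX β ∈ Set.center X)
    (π : X →ₐ[k] A) (hπsurj : Function.Surjective π)
    (hker : ∀ x y : X, π x = 0 → π y = 0 → x * y = 0)
    (hεcomp : ∀ β : B, π (εX β) = ε β)
    (s t : A →ₗ[k] X) (hs : ∀ a : A, π (s a) = a) (ht : ∀ a : A, π (t a) = a) :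
    -- `c_s` takes values in `M = ker π`
    (∀ (a b : A) (α : B), π (εX α * s a * s b - s (ε α * (a * b))) = 0)
    -- `c_s` is a secondary Hochschild 2-cocycle with values in the bimodule `ker π`
    ∧ (∀ (a b c : A) (α β γ : B),
        s (a * ε (α * β)) * (εX γ * s b * s c - s (ε γ * (b * c)))
          - (εX (β * γ) * s (a * b * ε α) * s c - s (ε (β * γ) * (a * b * ε α * c)))
          + (εX (α * β) * s a * s (b * c * ε γ) - s (ε (α * β) * (a * (b * c * ε γ))))
          - (εX α * s a * s b - s (ε α * (a * b))) * s (c * ε (β * γ)) = 0)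
    -- `c_s − c_t = δ^ε_1 (s − t)`
    ∧ (∀ (a b : A) (α : B),
        (εX α * s a * s b - s (ε α * (a * b))) - (εX α * t a * t b - t (ε α * (a * b)))
          = s (a * ε α) * (s b - t b) - (s (a * b * ε α) - t (a * b * ε α))
              + (s a - t a) * s (b * ε α)) := by
  -- centrality, restated
  have hcA : ∀ (β : B) (a : A), ε β * a = a * ε β := fun β a =>
    (Set.mem_center_iff.mp (hcent β)).comm a
  have hcX : ∀ (β : B) (x : X), εX β * x = x * εX β := fun β x =>
    (Set.mem_center_iff.mp (hXcent β)).comm x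
  -- key multiplication lemmas for M = ker π with M² = 0
  have ml : ∀ x y u : X, π x = π y → π u = 0 → x * u = y * u := by
    intro x y u h hu
    have h0 : (x - y) * u = 0 := hker _ _ (by rw [map_sub, h, sub_self]) hu
    rw [sub_mul, sub_eq_zero] at h0
    exact h0
  have mr : ∀ x y u : X, π x = π y → π u = 0 → u * x = u * y := by
    intro x y u h hu
    have h0 : u * (x - y) = 0 := hker _ _ hu (by rw [map_sub, h, sub_self])
    rw [mul_sub, sub_eq_zero] at h0
    exact h0
  -- pull central elements left past anything
  have pulls : ∀ (δ : B) (x y : X), x * (εX δ * y) = εX δ * (x * y) := by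
    intro δ x y
    rw [← mul_assoc, ← hcX, mul_assoc]
  have pulls' : ∀ (δ : B) (x : X), x * εX δ = εX δ * x := fun δ x => (hcX δ x).symm
  -- part 1: c_s takes values in ker π
  have part1 : ∀ (a b : A) (α : B), π (εX α * s a * s b - s (ε α * (a * b))) = 0 := by
    intro a b α
    simp [map_mul, hs, hεcomp, mul_assoc]
  refine ⟨part1, ?_, ?_⟩
  · intro a b c α β γ
    -- argument rewrites
    have g1 : s (ε γ * (b * c)) = s (b * c * ε γ) := by rw [hcA]
    have g2 : s (ε α * (a * b)) = s (a * b * ε α) := by rw [hcA]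
    have g3 : s (ε (β * γ) * (a * b * ε α * c)) = s (ε (α * β) * (a * (b * c * ε γ))) := by
      congr 1
      simp only [map_mul]
      linear_combination (norm := noncomm_ring) (ε β * ε γ * a * b) * hcA α c
        - hcA α (ε β * ε γ * (a * b * c)) + (ε α * ε β) * hcA γ (a * b * c)
    have h1 : s (a * ε (α * β)) * (εX γ * s b * s c - s (ε γ * (b * c)))
        = (εX (α * β) * s a) * (εX γ * s b * s c - s (ε γ * (b * c))) := by
      refine ml _ _ _ ?_ (part1 b c γ)
      rw [hs, map_mul π, hεcomp, hs, hcA]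
    have h2 : (εX α * s a * s b - s (ε α * (a * b))) * s (c * ε (β * γ))
        = (εX α * s a * s b - s (ε α * (a * b))) * (εX (β * γ) * s c) := by
      refine mr _ _ _ ?_ (part1 a b α)
      rw [hs, map_mul π, hεcomp, hs, hcA]
    rw [h1, h2, g1, g2, g3]
    have q1 : εX (α * β) * s a * (εX γ * s b * s c)
        = εX α * s a * s b * (εX (β * γ) * s c) := by
      simp only [map_mul]
      linear_combination (norm := noncomm_ring) εX α * hcX β (s a * s b) * (εX γ * s c)
        + εX α * εX β * s a * hcX γ (s b) * s c
    have q2 : εX (β * γ) * s (a * b * ε α) * s c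
        = s (a * b * ε α) * (εX (β * γ) * s c) := by
      rw [← mul_assoc, pulls']
    linear_combination (norm := noncomm_ring) q1 - q2
  · intro a b α
    have g2s : s (ε α * (a * b)) = s (a * b * ε α) := by rw [hcA]
    have g2t : t (ε α * (a * b)) = t (a * b * ε α) := by rw [hcA]
    have r1 : s (a * ε α) * (s b - t b) = (εX α * s a) * (s b - t b) := by
      refine ml _ _ _ ?_ ?_
      · rw [hs, map_mul π, hεcomp, hs, hcA]
      · rw [map_sub, hs, ht, sub_self]
    have r2 : (s a - t a) * s (b * ε α) = (s a - t a) * (εX α * t b) := by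
      refine mr _ _ _ ?_ ?_
      · rw [hs, map_mul π, hεcomp, ht, hcA]
      · rw [map_sub, hs, ht, sub_self]
    rw [g2s, g2t, r1, r2]
    have q1 : s a * (εX α * t b) = εX α * (s a * t b) := pulls α (s a) (t b)
    have q2 : t a * (εX α * t b) = εX α * (t a * t b) := pulls α (t a) (t b)
    linear_combination (norm := noncomm_ring) q2 - q1

end SecondaryHochschild
end

section
/- Let M be an A-bimodule with ε(α)m = mε(α), and c ∈ C^2((A,B,ε);M) a 2-cocycle. Define on X = A ⊕ M the products m_{α,X}((a+m)⊗(b+n)) = ε(α)ab + ε(α)an + mbε(α) + c(a⊗b⊗α). Then (X, m_{1,X}) is an associative unital k-algebra with unit 1_X = 1_A − c(1_A ⊗ 1_A ⊗ 1_B), and ε_X(α) = ε(α) − 2ε(α)c(1⊗1⊗1) + c(1⊗1⊗α) defines a k-algebra map B → X making X a B-algebra; the canonical projection π : X → A is a surjective B-algebra morphism with ker(π) = M, M² = 0, and π∘ε_X = ε. -/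
open MulOpposite

namespace SecondaryHochschild

variable {k : Type*} [CommRing k] {A : Type*} [Ring A] [Algebra k A]
  {B : Type*} [CommRing B] [Algebra k B]
  {M : Type*} [AddCommGroup M] [Module k M] [Module A M] [Module Aᵐᵒᵖ M]

/-- The family of products `m_{α,X}` on `X = A ⊕ M` associated to a `k`-trilinear
2-cochain `c`: `m_{α,X}((a+m)⊗(b+n)) = ε(α)ab + ε(α)an + mbε(α) + c(a⊗b⊗α)`. -/
def xmul (ε : B →ₐ[k] A) (c : A →ₗ[k] A →ₗ[k] B →ₗ[k] M) (α : B) (p q : A × M) :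
    A × M :=
  (ε α * (p.1 * q.1), (p.1 * ε α) • q.2 + op (q.1 * ε α) • p.2 + c p.1 q.1 α)

/-- The unit `1_X = 1_A − c(1_A ⊗ 1_A ⊗ 1_B)` of the extension algebra. -/
def xone (c : A →ₗ[k] A →ₗ[k] B →ₗ[k] M) : A × M := (1, - c 1 1 1)

/-- The structure map `ε_X(α) = ε(α) − 2ε(α)c(1⊗1⊗1) + c(1⊗1⊗α)`. -/
def εX (ε : B →ₐ[k] A) (c : A →ₗ[k] A →ₗ[k] B →ₗ[k] M) (α : B) : A × M :=
  (ε α, c 1 1 α - (2 : ℤ) • (ε α • c 1 1 1))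


set_option maxHeartbeats 4000000 in
/-- Given a secondary Hochschild 2-cocycle `c ∈ C²((A,B,ε);M)`, the
products `m_{α,X}` turn `X = A ⊕ M` into a `B`-algebra: `(X, m_{1,X})` is an
associative `k`-algebra with unit `1_X = 1_A − c(1⊗1⊗1)`, the family `m_{α,X}` is
additive and associative in the sense `m_{βγ,X}(m_{α,X} ⊗ id) = m_{αβ,X}(id ⊗ m_{γ,X})`,
`ε_X : B → X` is a unital multiplicative `k`-linear map with central image, and the
canonical projection `π = fst : X → A` is a surjective morphism with `ker π = 0 ⊕ M`,
`(ker π)² = 0` and `π ∘ ε_X = ε`. -/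
theorem extension_from_cocycle
    {k : Type*} [Field k] {A : Type*} [Ring A] [Algebra k A]
    {B : Type*} [CommRing B] [Algebra k B]
    {M : Type*} [AddCommGroup M] [Module k M] [Module A M] [Module Aᵐᵒᵖ M]
    [SMulCommClass A Aᵐᵒᵖ M] [IsScalarTower k A M] [IsScalarTower k Aᵐᵒᵖ M]
    (ε : B →ₐ[k] A) (hcent : ∀ β : B, ε β ∈ Set.center A)
    (hsym : ∀ (β : B) (m : M), ε β • m = op (ε β) • m)
    (c : A →ₗ[k] A →ₗ[k] B →ₗ[k] M)
    (hcoc : ∀ (a b d : A) (α β γ : B),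
      (a * ε (α * β)) • c b d γ - c (a * b * ε α) d (β * γ)
        + c a (b * d * ε γ) (α * β) - op (d * ε (β * γ)) • c a b α = 0) :
    -- `(X, m_{1,X})` is an associative `k`-algebra with unit `1_X`
    (∀ p q r : A × M, xmul ε c 1 (xmul ε c 1 p q) r = xmul ε c 1 p (xmul ε c 1 q r))
    ∧ (∀ p : A × M, xmul ε c 1 (xone c) p = p ∧ xmul ε c 1 p (xone c) = p)
    -- the family `m_{α,X}` is additive in `α` and generalized associative
    ∧ (∀ (α β : B) (p q : A × M),
        xmul ε c (α + β) p q = xmul ε c α p q + xmul ε c β p q)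
    ∧ (∀ (α β γ : B) (p q r : A × M),
        xmul ε c (β * γ) (xmul ε c α p q) r = xmul ε c (α * β) p (xmul ε c γ q r))
    -- `ε_X` is a `k`-algebra map `B → X` with central image
    ∧ εX ε c 1 = xone c
    ∧ (∀ α β : B, εX ε c (α * β) = xmul ε c 1 (εX ε c α) (εX ε c β))
    ∧ (∀ α β : B, εX ε c (α + β) = εX ε c α + εX ε c β)
    ∧ (∀ (q : k) (α : B), εX ε c (q • α) = q • εX ε c α)
    ∧ (∀ (α : B) (p : A × M),
        xmul ε c 1 (εX ε c α) p = xmul ε c 1 p (εX ε c α))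
    -- the projection `π = fst` is a surjective morphism, `ker π = M`, `M² = 0`,
    -- and `π ∘ ε_X = ε`
    ∧ (∀ p q : A × M, (xmul ε c 1 p q).1 = p.1 * q.1)
    ∧ (∀ a : A, ∃ p : A × M, p.1 = a)
    ∧ (∀ p : A × M, p.1 = 0 ↔ ∃ m : M, p = (0, m))
    ∧ (∀ p q : A × M, p.1 = 0 → q.1 = 0 → xmul ε c 1 p q = 0)
    ∧ (∀ α : B, (εX ε c α).1 = ε α) := by
  have hc : ∀ (β : B) (a : A), ε β * a = a * ε β :=
    fun β a => (Set.mem_center_iff.mp (hcent β)).comm a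
  have hlc : ∀ (δ : B) (x y : A), x * (ε δ * y) = ε δ * (x * y) := by
    intro δ x y; rw [← mul_assoc, ← hc δ x, mul_assoc]
  have hop : ∀ (x y : A) (m : M), op x • op y • m = op (y * x) • m := by
    intro x y m; rw [← mul_smul, ← op_mul]
  have hsm : ∀ (δ : B) (x : A) (m : M), ε δ • (x • m) = (x * ε δ) • m := by
    intro δ x m; rw [smul_smul, hc]
  have hos : ∀ (δ : B) (x : A) (m : M), op (ε δ) • (x • m) = (x * ε δ) • m := by
    intro δ x m; rw [← hsym, hsm]
  have hom : ∀ (δ : B) (x : A) (m : M), op x • (ε δ • m) = op (x * ε δ) • m := by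
    intro δ x m; rw [hsym, hop, hc]
  have hmo : ∀ (δ : B) (x : A) (m : M), ε δ • (op x • m) = op (x * ε δ) • m := by
    intro δ x m; rw [hsym, hop]
  have flip : ∀ {x : M}, x = 0 → -x = 0 := fun h => by rw [h, neg_zero]
  have h1 : ∀ a : A, c a 1 1 = a • c 1 1 1 := by
    intro a
    have h := hcoc a 1 1 1 1 1
    simp only [one_mul, mul_one, map_one, op_one, one_smul] at h
    rw [← sub_eq_zero]; refine Eq.trans ?_ (flip h); abel
  have h2 : ∀ a : A, c 1 a 1 = op a • c 1 1 1 := by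
    intro a
    have h := hcoc 1 1 a 1 1 1
    simp only [one_mul, mul_one, map_one, op_one, one_smul] at h
    rw [← sub_eq_zero]; refine Eq.trans ?_ h; abel
  have hassoc : ∀ (α β γ : B) (p q r : A × M),
      xmul ε c (β * γ) (xmul ε c α p q) r = xmul ε c (α * β) p (xmul ε c γ q r) := by
    intro α β γ p q r
    obtain ⟨p1, p2⟩ := p; obtain ⟨q1, q2⟩ := q; obtain ⟨r1, r2⟩ := r
    refine Prod.ext ?_ ?_
    · simp only [xmul]
      rw [map_mul ε β γ, map_mul ε α β]
      simp only [mul_assoc]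
      rw [hlc γ p1 (q1 * r1), hlc α (ε γ) (p1 * (q1 * r1)),
        hlc α (ε β) (ε γ * (p1 * (q1 * r1)))]
    · simp only [xmul, smul_add]
      rw [hc α (p1 * q1), hc γ (q1 * r1)]
      have hR : (p1 * q1 * ε α * ε (β * γ)) • r2
          = (p1 * ε (α * β)) • ((q1 * ε γ) • r2) := by
        rw [smul_smul]
        congr 1
        rw [map_mul ε β γ, map_mul ε α β]
        simp only [mul_assoc]
        rw [hlc α q1 (ε β * ε γ), hlc β q1 (ε γ)]
      have hQ : op (r1 * ε (β * γ)) • ((p1 * ε α) • q2)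
          = (p1 * ε (α * β)) • (op (r1 * ε γ) • q2) := by
        rw [← smul_comm (p1 * ε α) (op (r1 * ε (β * γ))) q2, map_mul ε β γ, hc β (ε γ),
          ← mul_assoc r1 (ε γ) (ε β), ← hmo β (r1 * ε γ), smul_smul, map_mul ε α β,
          mul_assoc]
      have hP : op (r1 * ε (β * γ)) • (op (q1 * ε α) • p2)
          = op (q1 * r1 * ε γ * ε (α * β)) • p2 := by
        rw [hop]
        congr 1
        rw [map_mul ε β γ, map_mul ε α β]
        simp only [mul_assoc]
        rw [hlc β r1 (ε γ), hlc γ r1 (ε α * ε β), hlc α r1 (ε β), ← hc γ r1, ← hc β r1,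
          hlc α (ε γ) (ε β * r1), hlc β (ε γ) r1]
      rw [hR, hQ, hP, ← sub_eq_zero]
      refine Eq.trans ?_ (flip (hcoc p1 q1 r1 α β γ))
      abel
  refine ⟨fun p q r => by simpa using hassoc 1 1 1 p q r, ?_, ?_, hassoc, ?_, ?_, ?_, ?_, ?_,
    ?_, fun a => ⟨(a, 0), rfl⟩, ?_, ?_, fun α => rfl⟩
  · -- unit laws
    intro p
    constructor
    · refine Prod.ext ?_ ?_
      · simp [xmul, xone]
      · simp only [xmul, xone, map_one, mul_one, one_mul, h2 p.1]
        rw [one_smul, smul_neg]; abel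
    · refine Prod.ext ?_ ?_
      · simp [xmul, xone]
      · simp only [xmul, xone, map_one, mul_one, one_mul, h1 p.1]
        rw [op_one, one_smul, smul_neg]; abel
  · -- additivity in α
    intro α β p q
    refine Prod.ext ?_ ?_
    · simp [xmul, map_add, add_mul, mul_add]
    · simp [xmul, map_add, mul_add, add_mul, add_smul, op_add]
      abel
  · -- εX 1 = xone
    refine Prod.ext ?_ ?_
    · simp [εX, xone]
    · simp [εX, xone, two_smul]
  · -- εX multiplicative
    intro α β
    have hA := hcoc 1 1 1 α β 1
    simp only [one_mul, mul_one, map_one, map_mul, op_one, one_smul] at hA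
    have hB := hcoc (ε α) 1 1 1 1 β
    simp only [one_mul, mul_one, map_one, op_one, one_smul] at hB
    rw [h1 (ε α), hos β (ε α)] at hB
    refine Prod.ext ?_ ?_
    · simp [εX, xmul, map_mul]
    · simp only [εX, xmul, map_one, map_mul, mul_one, one_mul, two_smul, smul_sub,
        smul_add, smul_smul, hos]
      have h0 := congrArg₂ (· - ·) hA hB
      simp only [sub_zero] at h0
      rw [← sub_eq_zero]
      refine Eq.trans ?_ h0
      abel
  · -- εX additive
    intro α β
    refine Prod.ext ?_ ?_
    · simp [εX, map_add]
    · simp [εX, map_add, add_smul, smul_add, two_smul]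
      abel
  · -- εX k-linear
    intro q α
    refine Prod.ext ?_ ?_
    · simp [εX]
    · simp [εX, smul_sub, two_smul, smul_add]
  · -- central image
    intro α p
    have hC1 := hcoc 1 1 p.1 α 1 1
    simp only [one_mul, mul_one, map_one, op_one, one_smul] at hC1
    rw [h2 p.1, hmo α p.1] at hC1
    have hC2 := hcoc p.1 1 1 1 1 α
    simp only [one_mul, mul_one, map_one, op_one, one_smul] at hC2
    rw [h1 p.1, hos α p.1] at hC2
    have h3 := hcoc 1 p.1 1 1 α 1
    simp only [one_mul, mul_one, map_one, op_one, one_smul] at h3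
    rw [h1 p.1, h2 p.1, hsm α p.1, hop (ε α) p.1] at h3
    refine Prod.ext ?_ ?_
    · simp only [xmul, εX, map_one, one_mul]
      rw [hc]
    · simp only [xmul, εX, map_one, mul_one, one_mul, two_smul, smul_sub, smul_add,
        smul_smul, hom]
      rw [hsym α p.2]
      have h0 := congrArg₂ (· - ·) (congrArg₂ (· - ·) h3 hC1) hC2
      simp only [sub_zero] at h0
      rw [← sub_eq_zero]
      refine Eq.trans ?_ h0
      abel
  · -- π multiplicative
    intro p q; simp [xmul]
  · -- kernel
    intro p
    constructor
    · intro h; exact ⟨p.2, Prod.ext h rfl⟩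
    · rintro ⟨m, rfl⟩; rfl
  · -- M² = 0
    intro p q hp hq
    refine Prod.ext ?_ ?_ <;> simp [xmul, hp, hq]

end SecondaryHochschild
end

section
/- Let A = M = k[X,Y], f, g ∈ k[X,Y], B = k[f,g], ε : B → A the inclusion with ε(f) = f(X,Y), ε(g) = g(X,Y). For a, b ∈ k[X,Y] define σ_{a,b}(P ⊗ Q ⊗ Λ(f,g)) = PQ(∂Λ/∂f(f,g)·a + ∂Λ/∂g(f,g)·b). Then every element of ker(Φ₂ : H^2((A,B,ε);A) → H^2(A,A)) is the class of some σ_{a,b}, and the classes of σ_{a,b} and σ_{c,d} are equal if and only if there exist v, w ∈ k[X,Y] with (a−c, b−d)^T = J(f,g)·(v,w)^T, where J(f,g) is the Jacobian matrix of (f,g) with respect to (X,Y). Consequently ker(Φ₂) ≅ (k[X,Y] ⊕ k[X,Y])/Image(J(f,g)). -/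
open Finset MulOpposite

namespace SecondaryHochschild

variable {k : Type*} [CommRing k] {A : Type*} [Ring A] [Algebra k A]
  {B : Type*} [CommRing B] [Algebra k B]

lemma delta_two_apply (ε : B →ₐ[k] A) (F : Cochain A B) (a : ℕ → A) (b : ℕ → ℕ → B) :
    δ ε 2 F a b
      = a 0 * ε (b 0 1 * b 0 2) * F (fun j => a (j+1)) (fun j l => b (j+1) (l+1))
        - F (faceA ε 0 a b) (faceB 0 b) + F (faceA ε 1 a b) (faceB 1 b)
        - F a b * (a 2 * ε (b 0 2 * b 1 2)) := by
  simp [δ, Finset.sum_range_succ, Finset.prod_range_succ]; abel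

lemma delta_one_apply (ε : B →ₐ[k] A) (F : Cochain A B) (a : ℕ → A) (b : ℕ → ℕ → B) :
    δ ε 1 F a b
      = a 0 * ε (b 0 1) * F (fun j => a (j+1)) (fun j l => b (j+1) (l+1))
        - F (faceA ε 0 a b) (faceB 0 b)
        + F a b * (a 1 * ε (b 0 1)) := by
  simp [δ, Finset.sum_range_succ, Finset.prod_range_succ]; abel

set_option synthInstance.maxHeartbeats 2000000 in
set_option maxHeartbeats 2000000 in
/-- Let `A = M = k[X,Y]`, `f, g ∈ k[X,Y]`, `B = k[f,g]` and
`ε : B → A` the inclusion.  For `a, b ∈ k[X,Y]` let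
`σ_{a,b}(P ⊗ Q ⊗ Λ(f,g)) = P Q (∂Λ/∂f(f,g)·a + ∂Λ/∂g(f,g)·b)`; equivalently
`σ_{a,b}(P ⊗ Q ⊗ Λ) = P Q v(Λ)` for the `k`-derivation `v : B → k[X,Y]` with
`v(f) = a`, `v(g) = b`.  Then each `σ_{a,b}` is a 2-cocycle, every element of
`ker(Φ₂ : H²((A,B,ε);A) → H²(A,A))` is the class of some `σ_{a,b}`, and the classes
of `σ_{a,b}` and `σ_{c,d}` agree iff `(a−c, b−d)ᵀ` lies in the image of the Jacobian
matrix `J(f,g)`.  Consequently `ker Φ₂ ≅ (k[X,Y] ⊕ k[X,Y]) / Image J(f,g)`. -/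
theorem mvpolynomial_example
    {k : Type*} [Field k] (f g : MvPolynomial (Fin 2) k) :
    -- each `σ_{a,b}` (i.e. `σ_v` for a derivation `v`) is a 2-cocycle
    (∀ v : ↥(Algebra.adjoin k {f, g}) →ₗ[k] MvPolynomial (Fin 2) k,
      (∀ x y : ↥(Algebra.adjoin k {f, g}),
          v (x * y) = (x : MvPolynomial (Fin 2) k) * v y
            + (y : MvPolynomial (Fin 2) k) * v x) →
      δ (Algebra.adjoin k {f, g}).val 2 (fun a b => a 0 * a 1 * v (b 0 1)) = 0)
    -- every element of `ker Φ₂` is the class of some `σ_{a,b}`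
    ∧ (∀ σ : MvPolynomial (Fin 2) k →ₗ[k] MvPolynomial (Fin 2) k →ₗ[k]
            ↥(Algebra.adjoin k {f, g}) →ₗ[k] MvPolynomial (Fin 2) k,
        δ (Algebra.adjoin k {f, g}).val 2 (fun a b => σ (a 0) (a 1) (b 0 1)) = 0 →
        (∃ u : MvPolynomial (Fin 2) k →ₗ[k] MvPolynomial (Fin 2) k,
          ∀ P Q : MvPolynomial (Fin 2) k, σ P Q 1 = P * u Q - u (P * Q) + u P * Q) →
        ∃ (a b : MvPolynomial (Fin 2) k)
          (v : ↥(Algebra.adjoin k {f, g}) →ₗ[k] MvPolynomial (Fin 2) k),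
          (∀ x y : ↥(Algebra.adjoin k {f, g}),
              v (x * y) = (x : MvPolynomial (Fin 2) k) * v y
                + (y : MvPolynomial (Fin 2) k) * v x)
          ∧ v ⟨f, Algebra.subset_adjoin (Set.mem_insert f {g})⟩ = a
          ∧ v ⟨g, Algebra.subset_adjoin
                (Set.mem_insert_of_mem f (Set.mem_singleton_iff.mpr rfl))⟩ = b
          ∧ ∃ w : MvPolynomial (Fin 2) k →ₗ[k] MvPolynomial (Fin 2) k,
              (fun a' b' => σ (a' 0) (a' 1) (b' 0 1) - a' 0 * a' 1 * v (b' 0 1))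
                = δ (Algebra.adjoin k {f, g}).val 1 (fun a' _ => w (a' 0)))
    -- `σ_{a,b}` and `σ_{c,d}` are cohomologous iff `(a−c, b−d)ᵀ ∈ Image J(f,g)`
    ∧ (∀ (a b c d : MvPolynomial (Fin 2) k)
        (v v' : ↥(Algebra.adjoin k {f, g}) →ₗ[k] MvPolynomial (Fin 2) k),
        (∀ x y : ↥(Algebra.adjoin k {f, g}),
            v (x * y) = (x : MvPolynomial (Fin 2) k) * v y
              + (y : MvPolynomial (Fin 2) k) * v x) →
        (∀ x y : ↥(Algebra.adjoin k {f, g}),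
            v' (x * y) = (x : MvPolynomial (Fin 2) k) * v' y
              + (y : MvPolynomial (Fin 2) k) * v' x) →
        v ⟨f, Algebra.subset_adjoin (Set.mem_insert f {g})⟩ = a →
        v ⟨g, Algebra.subset_adjoin
            (Set.mem_insert_of_mem f (Set.mem_singleton_iff.mpr rfl))⟩ = b →
        v' ⟨f, Algebra.subset_adjoin (Set.mem_insert f {g})⟩ = c →
        v' ⟨g, Algebra.subset_adjoin
            (Set.mem_insert_of_mem f (Set.mem_singleton_iff.mpr rfl))⟩ = d →
        ((∃ w : MvPolynomial (Fin 2) k →ₗ[k] MvPolynomial (Fin 2) k,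
            (fun a' b' => a' 0 * a' 1 * (v (b' 0 1) - v' (b' 0 1)))
              = δ (Algebra.adjoin k {f, g}).val 1 (fun a' _ => w (a' 0)))
          ↔ ∃ V W : MvPolynomial (Fin 2) k,
              a - c = MvPolynomial.pderiv (0 : Fin 2) f * V
                  + MvPolynomial.pderiv (1 : Fin 2) f * W
              ∧ b - d = MvPolynomial.pderiv (0 : Fin 2) g * V
                  + MvPolynomial.pderiv (1 : Fin 2) g * W)) := by
  refine ⟨?_, ?_, ?_⟩
  · intro v hv
    funext a b
    rw [delta_two_apply]
    simp only [faceA, faceB, mIdx, Pi.zero_apply]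
    norm_num
    rw [hv, hv]
    ring
  · intro σ hσ hu
    obtain ⟨u, hu⟩ := hu
    have hE : ∀ P Q R : MvPolynomial (Fin 2) k, ∀ α β γ : ↥(Algebra.adjoin k {f, g}),
        P * (↑α * ↑β) * σ Q R γ - σ (↑α * P * Q) R (β * γ) + σ P (↑γ * Q * R) (α * β)
          - σ P Q α * (R * (↑β * ↑γ)) = 0 := by
      intro P Q R α β γ
      have h := congrFun (congrFun hσ
        (fun j => if j = 0 then P else if j = 1 then Q else R))
        (fun j l => if j = 0 then (if l = 1 then α else β) else γ)
      rw [delta_two_apply] at h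
      simp only [faceA, faceB, mIdx, Pi.zero_apply] at h
      norm_num at h
      linear_combination h
    have key : ∀ P R : MvPolynomial (Fin 2) k, ∀ γ : ↥(Algebra.adjoin k {f, g}),
        σ P R γ = P * ↑γ * u R - u (↑γ * P * R) + u P * R * ↑γ
          + P * R * (σ 1 1 γ + u ↑γ - 2 * ↑γ * u 1) := by
      intro P R γ
      have eA := hE P 1 R 1 1 γ
      have eB := hE 1 1 R γ 1 1
      simp only [one_mul, mul_one, OneMemClass.coe_one] at eA eB
      have h1 := hu P 1
      have h2 := hu P (↑γ * R)
      have h3 := hu (↑γ) R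
      have h4 := hu 1 R
      simp only [one_mul, mul_one] at h1 h2 h3 h4
      linear_combination (norm := ring_nf) (-1 : MvPolynomial (Fin 2) k) * eA + P * eB
        + P * h3 + h2 - (P * (↑γ : MvPolynomial (Fin 2) k)) * h4
        - (R * (↑γ : MvPolynomial (Fin 2) k)) * h1
    let v : ↥(Algebra.adjoin k {f, g}) →ₗ[k] MvPolynomial (Fin 2) k :=
      { toFun := fun γ => σ 1 1 γ + u ↑γ - 2 * ↑γ * u 1
        map_add' := by
          intro x y
          simp only [Subalgebra.coe_add, map_add]
          ring
        map_smul' := by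
          intro r x
          simp only [SetLike.val_smul, map_smul, RingHom.id_apply, smul_sub, smul_add,
            mul_smul_comm, smul_mul_assoc] }
    have hvapp : ∀ γ : ↥(Algebra.adjoin k {f, g}),
        v γ = σ 1 1 γ + u ↑γ - 2 * ↑γ * u 1 := fun γ => rfl
    have hvd : ∀ x y : ↥(Algebra.adjoin k {f, g}),
        v (x * y) = (x : MvPolynomial (Fin 2) k) * v y
          + (y : MvPolynomial (Fin 2) k) * v x := by
      intro x y
      have eC := hE 1 1 1 x y 1
      simp only [one_mul, mul_one, OneMemClass.coe_one] at eC
      have k1 := key (↑x) 1 y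
      have h11 := hu 1 1
      simp only [one_mul, mul_one] at h11 k1
      rw [hvapp, hvapp, hvapp]
      have hc : ((x * y : ↥(Algebra.adjoin k {f, g})) : MvPolynomial (Fin 2) k)
          = (↑x : MvPolynomial (Fin 2) k) * ↑y := rfl
      rw [hc]
      linear_combination (norm := ring_nf) eC + k1
        - ((↑x : MvPolynomial (Fin 2) k) * (↑y : MvPolynomial (Fin 2) k)) * h11
    refine ⟨v ⟨f, Algebra.subset_adjoin (Set.mem_insert f {g})⟩,
      v ⟨g, Algebra.subset_adjoin (Set.mem_insert_of_mem f (Set.mem_singleton_iff.mpr rfl))⟩,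
      v, hvd, rfl, rfl, u, ?_⟩
    funext a' b'
    rw [delta_one_apply]
    simp only [faceA, faceB, mIdx, Pi.zero_apply]
    norm_num
    rw [hvapp]
    linear_combination key (a' 0) (a' 1) (b' 0 1)
  · intro a b c d v v' hv hv' hvf hvg hv'f hv'g
    have hv1 : v 1 = 0 := by
      have h := hv 1 1
      simp only [mul_one, one_mul, OneMemClass.coe_one] at h
      exact (left_eq_add.mp h)
    have hv'1 : v' 1 = 0 := by
      have h := hv' 1 1
      simp only [mul_one, one_mul, OneMemClass.coe_one] at h
      exact (left_eq_add.mp h)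
    constructor
    · rintro ⟨w, hw⟩
      have hp : ∀ P Q : MvPolynomial (Fin 2) k, ∀ γ : ↥(Algebra.adjoin k {f, g}),
          P * Q * (v γ - v' γ) = P * ↑γ * w Q - w (↑γ * P * Q) + w P * (Q * ↑γ) := by
        intro P Q γ
        have h := congrFun (congrFun hw (fun j => if j = 0 then P else Q)) (fun _ _ => γ)
        rw [delta_one_apply] at h
        simp only [faceA, faceB, mIdx] at h
        norm_num at h
        linear_combination h
      have w1 : w 1 = 0 := by
        have h := hp 1 1 1
        simp only [OneMemClass.coe_one, one_mul, mul_one, hv1, hv'1, sub_self, mul_zero] at h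
        linear_combination -h
      have wleib : ∀ P Q : MvPolynomial (Fin 2) k, w (P * Q) = P * w Q + Q * w P := by
        intro P Q
        have h := hp P Q 1
        simp only [OneMemClass.coe_one, one_mul, mul_one, hv1, hv'1, sub_self, mul_zero] at h
        linear_combination h
      let D : Derivation k (MvPolynomial (Fin 2) k) (MvPolynomial (Fin 2) k) :=
        { toLinearMap := w
          map_one_eq_zero' := w1
          leibniz' := by
            intro p q
            simp only [LinearMap.coe_mk, smul_eq_mul]
            rw [wleib] }
      have hDe : D = w (MvPolynomial.X 0) • MvPolynomial.pderiv (0 : Fin 2)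
          + w (MvPolynomial.X 1) • MvPolynomial.pderiv (1 : Fin 2) := by
        apply MvPolynomial.derivation_ext
        intro i
        fin_cases i <;>
          simp [D, MvPolynomial.pderiv_X_self, MvPolynomial.pderiv_X_of_ne, Fin.ext_iff]
      have hDapp : ∀ p : MvPolynomial (Fin 2) k,
          w p = w (MvPolynomial.X 0) * MvPolynomial.pderiv (0 : Fin 2) p
            + w (MvPolynomial.X 1) * MvPolynomial.pderiv (1 : Fin 2) p := by
        intro p
        have : D p = w p := rfl
        rw [← this, hDe]
        simp [smul_eq_mul]
      have hvv' : ∀ γ : ↥(Algebra.adjoin k {f, g}), v γ - v' γ = -w ↑γ := by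
        intro γ
        have h := hp 1 1 γ
        simp only [one_mul, mul_one, w1, mul_zero, zero_mul, zero_sub] at h
        linear_combination h
      refine ⟨-(w (MvPolynomial.X 0)), -(w (MvPolynomial.X 1)), ?_, ?_⟩
      · have h := hvv' ⟨f, Algebra.subset_adjoin (Set.mem_insert f {g})⟩
        rw [hvf, hv'f] at h
        have h' : a - c = -w f := h
        linear_combination h' - hDapp f
      · have h := hvv' ⟨g, Algebra.subset_adjoin
          (Set.mem_insert_of_mem f (Set.mem_singleton_iff.mpr rfl))⟩
        rw [hvg, hv'g] at h
        have h' : b - d = -w g := h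
        linear_combination h' - hDapp g
    · rintro ⟨V, W, hV, hW⟩
      let w : MvPolynomial (Fin 2) k →ₗ[k] MvPolynomial (Fin 2) k :=
        { toFun := fun p => -(MvPolynomial.pderiv (0 : Fin 2) p * V
              + MvPolynomial.pderiv (1 : Fin 2) p * W)
          map_add' := by intro p q; simp only [map_add]; ring
          map_smul' := by
            intro r p
            simp only [Derivation.map_smul, RingHom.id_apply, smul_mul_assoc, smul_add,
              smul_neg] }
      have hwapp : ∀ p : MvPolynomial (Fin 2) k,
          w p = -(MvPolynomial.pderiv (0 : Fin 2) p * V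
            + MvPolynomial.pderiv (1 : Fin 2) p * W) := fun p => rfl
      have wleib : ∀ P Q : MvPolynomial (Fin 2) k, w (P * Q) = P * w Q + Q * w P := by
        intro P Q
        rw [hwapp, hwapp, hwapp, Derivation.leibniz, Derivation.leibniz]
        simp only [smul_eq_mul]
        ring
      have hagree : ∀ x : MvPolynomial (Fin 2) k, ∀ hx : x ∈ Algebra.adjoin k {f, g},
          v ⟨x, hx⟩ - v' ⟨x, hx⟩ = -w x := by
        intro x hx
        induction hx using Algebra.adjoin_induction with
        | mem z hz =>
          rcases Set.mem_insert_iff.mp hz with h | h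
          · have he : (⟨z, Algebra.subset_adjoin hz⟩ : ↥(Algebra.adjoin k {f, g}))
                = ⟨f, Algebra.subset_adjoin (Set.mem_insert f {g})⟩ := Subtype.ext h
            rw [he, hvf, hv'f, hwapp, h, hV]
            ring
          · rw [Set.mem_singleton_iff] at h
            have he : (⟨z, Algebra.subset_adjoin hz⟩ : ↥(Algebra.adjoin k {f, g}))
                = ⟨g, Algebra.subset_adjoin
                  (Set.mem_insert_of_mem f (Set.mem_singleton_iff.mpr rfl))⟩ := Subtype.ext h
            rw [he, hvg, hv'g, hwapp, h, hW]
            ring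
        | algebraMap r =>
          have he : (⟨algebraMap k (MvPolynomial (Fin 2) k) r, Subalgebra.algebraMap_mem _ r⟩
              : ↥(Algebra.adjoin k {f, g})) = r • 1 :=
            Subtype.ext (by simp [Algebra.algebraMap_eq_smul_one, MvPolynomial.smul_eq_C_mul])
          rw [he, map_smul, map_smul, hv1, hv'1, hwapp]
          simp [MvPolynomial.algebraMap_eq]
        | add x y hx hy ihx ihy =>
          rw [show (⟨x + y, add_mem hx hy⟩ : ↥(Algebra.adjoin k {f, g}))
              = ⟨x, hx⟩ + ⟨y, hy⟩ from rfl, map_add, map_add, map_add]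
          linear_combination ihx + ihy
        | mul x y hx hy ihx ihy =>
          rw [show (⟨x * y, mul_mem hx hy⟩ : ↥(Algebra.adjoin k {f, g}))
              = ⟨x, hx⟩ * ⟨y, hy⟩ from rfl, hv, hv', wleib]
          linear_combination x * ihy + y * ihx
      refine ⟨w, ?_⟩
      funext a' b'
      rw [delta_one_apply]
      simp only [faceA, faceB, mIdx, Pi.zero_apply]
      norm_num
      have hg : v (b' 0 1) - v' (b' 0 1) = -w ↑(b' 0 1) := hagree ↑(b' 0 1) (b' 0 1).2
      have e1 : ((b' 0 1 : ↥(Algebra.adjoin k {f, g})) : MvPolynomial (Fin 2) k)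
          * a' 0 * a' 1 = ↑(b' 0 1) * (a' 0 * a' 1) := by ring
      rw [e1, wleib, wleib (a' 0) (a' 1)]
      linear_combination (a' 0 * a' 1) * hg

end SecondaryHochschild
end
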